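/- Let M be the 6×6 skew-symmetric matrix over R of type (c) with lᵢ = xᵢ, i.e., with rows (0, x₀, x₁, 0, 0, 0), (−x₀, 0, x₂, 0, 0, 0), (−x₁, −x₂, 0, 0, 0, 0), (0, 0, 0, 0, x₁, x₂), (0, 0, 0, −x₁, 0, x₃), (0, 0, 0, −x₂, −x₃, 0). Let M′ and M″ be 6×6 skew-symmetric matrices over R all of whose entries are linear forms, and write M′_{ij} = Σ_{k=0}^{4} a_{ijk}·x_k with a_{ijk} ∈ ℂ for 0 ≤ i < j ≤ 5. If Pf(M + ε·M′ + ε²·M″) = 0 in R[ε]/(ε³), then (a₁₂₄ − a₃₅₄)·a₀₅₄ = 0 and (a₀₂₄ − a₃₄₄)·a₀₅₄ = 0. -/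

import Mathlib

set_option maxRecDepth 100000


open MvPolynomial Matrix

noncomputable section

/-- The polynomial ring `R = ℂ[x₀,…,x₄]`. -/
abbrev Rp : Type := MvPolynomial (Fin 5) ℂ

/-- The sub-Pfaffian `q_{αβ}(N)` of a `6 × 6` matrix: for `α < β` it is
`N_{ij}N_{kl} − N_{ik}N_{jl} + N_{il}N_{jk}` where `i < j < k < l` are the elements of
`{0,…,5} ∖ {α,β}`. -/
def subPf {A : Type*} [CommRing A] (N : Matrix (Fin 6) (Fin 6) A) (α β : Fin 6) : A :=
  match (List.finRange 6).filter (fun i => decide (i ≠ α) && decide (i ≠ β)) with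
  | [i, j, k, m] => N i j * N k m - N i k * N j m + N i m * N j k
  | _ => 0

/-- The Pfaffian of a `6 × 6` skew-symmetric matrix. -/
def pf {A : Type*} [CommRing A] (N : Matrix (Fin 6) (Fin 6) A) : A :=
  N 0 1 * subPf N 0 1 - N 0 2 * subPf N 0 2 + N 0 3 * subPf N 0 3
    - N 0 4 * subPf N 0 4 + N 0 5 * subPf N 0 5

/-- The ring `R[ε]/(ε³)`. -/
abbrev Reps3 : Type := Polynomial Rp ⧸ Ideal.span {(Polynomial.X : Polynomial Rp) ^ 3}

/-- The matrix `M + ε M' + ε² M''` over `R[ε]/(ε³)`. -/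
def jet2 (M M' M'' : Matrix (Fin 6) (Fin 6) Rp) : Matrix (Fin 6) (Fin 6) Reps3 :=
  Matrix.of fun i j =>
    Ideal.Quotient.mk _ (Polynomial.C (M i j) + Polynomial.C (M' i j) * Polynomial.X
      + Polynomial.C (M'' i j) * Polynomial.X ^ 2)


theorem pf_explicit {A : Type*} [CommRing A] (N : Matrix (Fin 6) (Fin 6) A) :
    pf N = N 0 1 * (N 2 3 * N 4 5 - N 2 4 * N 3 5 + N 2 5 * N 3 4)
      - N 0 2 * (N 1 3 * N 4 5 - N 1 4 * N 3 5 + N 1 5 * N 3 4)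
      + N 0 3 * (N 1 2 * N 4 5 - N 1 4 * N 2 5 + N 1 5 * N 2 4)
      - N 0 4 * (N 1 2 * N 3 5 - N 1 3 * N 2 5 + N 1 5 * N 2 3)
      + N 0 5 * (N 1 2 * N 3 4 - N 1 3 * N 2 4 + N 1 4 * N 2 3) := rfl

theorem coeff1_triple (p0 p1 p2 q0 q1 q2 r0 r1 r2 : ℂ) :
    (((Polynomial.C p0 + Polynomial.C p1 * Polynomial.X + Polynomial.C p2 * Polynomial.X ^ 2)
      * (Polynomial.C q0 + Polynomial.C q1 * Polynomial.X + Polynomial.C q2 * Polynomial.X ^ 2)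
      * (Polynomial.C r0 + Polynomial.C r1 * Polynomial.X + Polynomial.C r2 * Polynomial.X ^ 2)
      : Polynomial ℂ)).coeff 1
      = p0 * q0 * r1 + p0 * q1 * r0 + p1 * q0 * r0 := by
  have h : ((Polynomial.C p0 + Polynomial.C p1 * Polynomial.X + Polynomial.C p2 * Polynomial.X ^ 2)
      * (Polynomial.C q0 + Polynomial.C q1 * Polynomial.X + Polynomial.C q2 * Polynomial.X ^ 2)
      * (Polynomial.C r0 + Polynomial.C r1 * Polynomial.X + Polynomial.C r2 * Polynomial.X ^ 2)
      : Polynomial ℂ)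
      = Polynomial.C (p0*q0*r0) + Polynomial.C (p0*q0*r1 + p0*q1*r0 + p1*q0*r0) * Polynomial.X
        + Polynomial.C (p0*q0*r2 + p0*q1*r1 + p0*q2*r0 + p1*q0*r1 + p1*q1*r0 + p2*q0*r0)
          * Polynomial.X ^ 2
        + Polynomial.C (p0*q1*r2+p0*q2*r1+p1*q0*r2+p1*q1*r1+p1*q2*r0+p2*q0*r1+p2*q1*r0)
          * Polynomial.X ^ 3
        + Polynomial.C (p0*q2*r2+p1*q1*r2+p1*q2*r1+p2*q0*r2+p2*q1*r1+p2*q2*r0) * Polynomial.X ^ 4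
        + Polynomial.C (p1*q2*r2+p2*q1*r2+p2*q2*r1) * Polynomial.X ^ 5
        + Polynomial.C (p2*q2*r2) * Polynomial.X ^ 6 := by
    simp only [Polynomial.C_add, Polynomial.C_mul]; ring
  rw [h]
  simp only [Polynomial.coeff_add, Polynomial.coeff_C_mul, Polynomial.coeff_X_pow,
    Polynomial.coeff_C, Polynomial.coeff_X]
  norm_num

theorem coeff2_triple (p0 p1 p2 q0 q1 q2 r0 r1 r2 : ℂ) :
    (((Polynomial.C p0 + Polynomial.C p1 * Polynomial.X + Polynomial.C p2 * Polynomial.X ^ 2)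
      * (Polynomial.C q0 + Polynomial.C q1 * Polynomial.X + Polynomial.C q2 * Polynomial.X ^ 2)
      * (Polynomial.C r0 + Polynomial.C r1 * Polynomial.X + Polynomial.C r2 * Polynomial.X ^ 2)
      : Polynomial ℂ)).coeff 2
      = p0*q0*r2 + p0*q1*r1 + p0*q2*r0 + p1*q0*r1 + p1*q1*r0 + p2*q0*r0 := by
  have h : ((Polynomial.C p0 + Polynomial.C p1 * Polynomial.X + Polynomial.C p2 * Polynomial.X ^ 2)
      * (Polynomial.C q0 + Polynomial.C q1 * Polynomial.X + Polynomial.C q2 * Polynomial.X ^ 2)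
      * (Polynomial.C r0 + Polynomial.C r1 * Polynomial.X + Polynomial.C r2 * Polynomial.X ^ 2)
      : Polynomial ℂ)
      = Polynomial.C (p0*q0*r0) + Polynomial.C (p0*q0*r1 + p0*q1*r0 + p1*q0*r0) * Polynomial.X
        + Polynomial.C (p0*q0*r2 + p0*q1*r1 + p0*q2*r0 + p1*q0*r1 + p1*q1*r0 + p2*q0*r0)
          * Polynomial.X ^ 2
        + Polynomial.C (p0*q1*r2+p0*q2*r1+p1*q0*r2+p1*q1*r1+p1*q2*r0+p2*q0*r1+p2*q1*r0)
          * Polynomial.X ^ 3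
        + Polynomial.C (p0*q2*r2+p1*q1*r2+p1*q2*r1+p2*q0*r2+p2*q1*r1+p2*q2*r0) * Polynomial.X ^ 4
        + Polynomial.C (p1*q2*r2+p2*q1*r2+p2*q2*r1) * Polynomial.X ^ 5
        + Polynomial.C (p2*q2*r2) * Polynomial.X ^ 6 := by
    simp only [Polynomial.C_add, Polynomial.C_mul]; ring
  rw [h]
  simp only [Polynomial.coeff_add, Polynomial.coeff_C_mul, Polynomial.coeff_X_pow,
    Polynomial.coeff_C, Polynomial.coeff_X]
  norm_num

lemma degree_one_classify (d : Fin 5 →₀ ℕ) (hd : d.degree = 1) : ∃ v, d = Finsupp.single v 1 := by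
  have hs : d.degree = ∑ i : Fin 5, d i := by
    rw [Finsupp.degree]
    exact Finset.sum_subset (Finset.subset_univ _)
      (fun i _ h => Finsupp.notMem_support_iff.mp h)
  rw [hs, Fin.sum_univ_five] at hd
  have h5 : d 0 = 1 ∧ d 1 = 0 ∧ d 2 = 0 ∧ d 3 = 0 ∧ d 4 = 0 ∨
      d 1 = 1 ∧ d 0 = 0 ∧ d 2 = 0 ∧ d 3 = 0 ∧ d 4 = 0 ∨
      d 2 = 1 ∧ d 0 = 0 ∧ d 1 = 0 ∧ d 3 = 0 ∧ d 4 = 0 ∨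
      d 3 = 1 ∧ d 0 = 0 ∧ d 1 = 0 ∧ d 2 = 0 ∧ d 4 = 0 ∨
      d 4 = 1 ∧ d 0 = 0 ∧ d 1 = 0 ∧ d 2 = 0 ∧ d 3 = 0 := by omega
  rcases h5 with h|h|h|h|h
  exacts [⟨0, by ext i; fin_cases i <;> simp [Finsupp.single_apply, h.1, h.2.1, h.2.2.1, h.2.2.2.1, h.2.2.2.2]⟩,
    ⟨1, by ext i; fin_cases i <;> simp [Finsupp.single_apply, h.1, h.2.1, h.2.2.1, h.2.2.2.1, h.2.2.2.2]⟩,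
    ⟨2, by ext i; fin_cases i <;> simp [Finsupp.single_apply, h.1, h.2.1, h.2.2.1, h.2.2.2.1, h.2.2.2.2]⟩,
    ⟨3, by ext i; fin_cases i <;> simp [Finsupp.single_apply, h.1, h.2.1, h.2.2.1, h.2.2.2.1, h.2.2.2.2]⟩,
    ⟨4, by ext i; fin_cases i <;> simp [Finsupp.single_apply, h.1, h.2.1, h.2.2.1, h.2.2.2.1, h.2.2.2.2]⟩]

lemma homogOne_eq_sum (p : Rp) (hp : p.IsHomogeneous 1) :
    p = ∑ v : Fin 5, C (coeff (Finsupp.single v 1) p) * X v := by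
  apply MvPolynomial.ext
  intro d
  rw [coeff_sum]
  simp only [coeff_C_mul, coeff_X']
  by_cases hd : d.degree = 1
  · obtain ⟨v, rfl⟩ := degree_one_classify d hd
    rw [Finset.sum_eq_single v]
    · simp
    · intro w _ hw
      have : ¬ (Finsupp.single w 1 = Finsupp.single v 1) := by
        simp [Finsupp.single_eq_single_iff, hw]
      simp [this]
    · simp
  · rw [hp.coeff_eq_zero hd]
    symm
    apply Finset.sum_eq_zero
    intro w _
    have : ¬ (Finsupp.single w 1 = d) := by
      rintro rfl
      exact hd (Finsupp.degree_single _ _)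
    simp [this]


set_option maxHeartbeats 1000000 in
theorem master_coeffs (e f g : Fin 6 → Fin 6 → ℂ) :
    (pf (Matrix.of fun i j => Polynomial.C (e i j) + Polynomial.C (f i j) * Polynomial.X
        + Polynomial.C (g i j) * Polynomial.X ^ 2)).coeff 1
      = ((0:ℂ) + (e 0 1) * (e 2 3) * (f 4 5) + (e 0 1) * (f 2 3) * (e 4 5) + (f 0 1) * (e 2 3) * (e 4 5) - (e 0 1) * (e 2 4) * (f 3 5) - (e 0 1) * (f 2 4) * (e 3 5) - (f 0 1) * (e 2 4) * (e 3 5) + (e 0 1) * (e 2 5) * (f 3 4) + (e 0 1) * (f 2 5) * (e 3 4) + (f 0 1) * (e 2 5) * (e 3 4) - (e 0 2) * (e 1 3) * (f 4 5) - (e 0 2) * (f 1 3) * (e 4 5) - (f 0 2) * (e 1 3) * (e 4 5) + (e 0 2) * (e 1 4) * (f 3 5) + (e 0 2) * (f 1 4) * (e 3 5) + (f 0 2) * (e 1 4) * (e 3 5) - (e 0 2) * (e 1 5) * (f 3 4) - (e 0 2) * (f 1 5) * (e 3 4) - (f 0 2) * (e 1 5) * (e 3 4) + (e 0 3) * (e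 1 2) * (f 4 5) + (e 0 3) * (f 1 2) * (e 4 5) + (f 0 3) * (e 1 2) * (e 4 5) - (e 0 3) * (e 1 4) * (f 2 5) - (e 0 3) * (f 1 4) * (e 2 5) - (f 0 3) * (e 1 4) * (e 2 5) + (e 0 3) * (e 1 5) * (f 2 4) + (e 0 3) * (f 1 5) * (e 2 4) + (f 0 3) * (e 1 5) * (e 2 4) - (e 0 4) * (e 1 2) * (f 3 5) - (e 0 4) * (f 1 2) * (e 3 5) - (f 0 4) * (e 1 2) * (e 3 5) + (e 0 4) * (e 1 3) * (f 2 5) + (e 0 4) * (f 1 3) * (e 2 5) + (f 0 4) * (e 1 3) * (e 2 5) - (e 0 4) * (e 1 5) * (f 2 3) - (e 0 4) * (f 1 5) * (e 2 3) - (f 0 4) * (e 1 5) * (e 2 3) + (e 0 5) * (e 1 2) * (f 3 4) + (e 0 5) * (f 1 2) * (e 3 4) + (f 0 5) * (e 1 2) * (e 3 4) - (e 0 5) * (e 1 3) * (f 2 4) - (e 0 5) * (f 1 3) * (e 2 4) - (f 0 5) * (e 1 3) * (e 2 4) + (e 0 5) * (e 1 4) * (f 2 3) + (e 0 5) * (f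 1 4) * (e 2 3) + (f 0 5) * (e 1 4) * (e 2 3)) ∧
    (pf (Matrix.of fun i j => Polynomial.C (e i j) + Polynomial.C (f i j) * Polynomial.X
        + Polynomial.C (g i j) * Polynomial.X ^ 2)).coeff 2
      = ((0:ℂ) + (e 0 1) * (e 2 3) * (g 4 5) + (e 0 1) * (f 2 3) * (f 4 5) + (e 0 1) * (g 2 3) * (e 4 5) + (f 0 1) * (e 2 3) * (f 4 5) + (f 0 1) * (f 2 3) * (e 4 5) + (g 0 1) * (e 2 3) * (e 4 5) - (e 0 1) * (e 2 4) * (g 3 5) - (e 0 1) * (f 2 4) * (f 3 5) - (e 0 1) * (g 2 4) * (e 3 5) - (f 0 1) * (e 2 4) * (f 3 5) - (f 0 1) * (f 2 4) * (e 3 5) - (g 0 1) * (e 2 4) * (e 3 5) + (e 0 1) * (e 2 5) * (g 3 4) + (e 0 1) * (f 2 5) * (f 3 4) + (e 0 1) * (g 2 5) * (e 3 4) + (f 0 1) * (e 2 5) * (f 3 4) + (f 0 1) * (f 2 5) * (e 3 4) + (g 0 1) * (e 2 5) * (e 3 4) - (e 0 2) * (e 1 3) * (g 4 5) - (e 0 2)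 * (f 1 3) * (f 4 5) - (e 0 2) * (g 1 3) * (e 4 5) - (f 0 2) * (e 1 3) * (f 4 5) - (f 0 2) * (f 1 3) * (e 4 5) - (g 0 2) * (e 1 3) * (e 4 5) + (e 0 2) * (e 1 4) * (g 3 5) + (e 0 2) * (f 1 4) * (f 3 5) + (e 0 2) * (g 1 4) * (e 3 5) + (f 0 2) * (e 1 4) * (f 3 5) + (f 0 2) * (f 1 4) * (e 3 5) + (g 0 2) * (e 1 4) * (e 3 5) - (e 0 2) * (e 1 5) * (g 3 4) - (e 0 2) * (f 1 5) * (f 3 4) - (e 0 2) * (g 1 5) * (e 3 4) - (f 0 2) * (e 1 5) * (f 3 4) - (f 0 2) * (f 1 5) * (e 3 4) - (g 0 2) * (e 1 5) * (e 3 4) + (e 0 3) * (e 1 2) * (g 4 5) + (e 0 3) * (f 1 2) * (f 4 5) + (e 0 3) * (g 1 2) * (e 4 5) + (f 0 3) * (e 1 2) * (f 4 5) + (f 0 3) * (f 1 2) * (e 4 5) + (g 0 3) * (e 1 2) * (e 4 5) - (e 0 3) * (e 1 4) * (g 2 5) - (e 0 3) * (f 1 4) * (f 2 5) - (e 0 3)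 * (g 1 4) * (e 2 5) - (f 0 3) * (e 1 4) * (f 2 5) - (f 0 3) * (f 1 4) * (e 2 5) - (g 0 3) * (e 1 4) * (e 2 5) + (e 0 3) * (e 1 5) * (g 2 4) + (e 0 3) * (f 1 5) * (f 2 4) + (e 0 3) * (g 1 5) * (e 2 4) + (f 0 3) * (e 1 5) * (f 2 4) + (f 0 3) * (f 1 5) * (e 2 4) + (g 0 3) * (e 1 5) * (e 2 4) - (e 0 4) * (e 1 2) * (g 3 5) - (e 0 4) * (f 1 2) * (f 3 5) - (e 0 4) * (g 1 2) * (e 3 5) - (f 0 4) * (e 1 2) * (f 3 5) - (f 0 4) * (f 1 2) * (e 3 5) - (g 0 4) * (e 1 2) * (e 3 5) + (e 0 4) * (e 1 3) * (g 2 5) + (e 0 4) * (f 1 3) * (f 2 5) + (e 0 4) * (g 1 3) * (e 2 5) + (f 0 4) * (e 1 3) * (f 2 5) + (f 0 4) * (f 1 3) * (e 2 5) + (g 0 4) * (e 1 3) * (e 2 5) - (e 0 4) * (e 1 5) * (g 2 3) - (e 0 4) * (f 1 5) * (f 2 3) - (e 0 4) * (g 1 5) * (e 2 3) - (f 0 4)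 * (e 1 5) * (f 2 3) - (f 0 4) * (f 1 5) * (e 2 3) - (g 0 4) * (e 1 5) * (e 2 3) + (e 0 5) * (e 1 2) * (g 3 4) + (e 0 5) * (f 1 2) * (f 3 4) + (e 0 5) * (g 1 2) * (e 3 4) + (f 0 5) * (e 1 2) * (f 3 4) + (f 0 5) * (f 1 2) * (e 3 4) + (g 0 5) * (e 1 2) * (e 3 4) - (e 0 5) * (e 1 3) * (g 2 4) - (e 0 5) * (f 1 3) * (f 2 4) - (e 0 5) * (g 1 3) * (e 2 4) - (f 0 5) * (e 1 3) * (f 2 4) - (f 0 5) * (f 1 3) * (e 2 4) - (g 0 5) * (e 1 3) * (e 2 4) + (e 0 5) * (e 1 4) * (g 2 3) + (e 0 5) * (f 1 4) * (f 2 3) + (e 0 5) * (g 1 4) * (e 2 3) + (f 0 5) * (e 1 4) * (f 2 3) + (f 0 5) * (f 1 4) * (e 2 3) + (g 0 5) * (e 1 4) * (e 2 3)) := by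
  have hf : pf (Matrix.of fun i j => Polynomial.C (e i j) + Polynomial.C (f i j) * Polynomial.X
        + Polynomial.C (g i j) * Polynomial.X ^ 2)
      = (0 : Polynomial ℂ)
        + (Polynomial.C (e 0 1) + Polynomial.C (f 0 1) * Polynomial.X + Polynomial.C (g 0 1) * Polynomial.X ^ 2) * (Polynomial.C (e 2 3) + Polynomial.C (f 2 3) * Polynomial.X + Polynomial.C (g 2 3) * Polynomial.X ^ 2) * (Polynomial.C (e 4 5) + Polynomial.C (f 4 5) * Polynomial.X + Polynomial.C (g 4 5) * Polynomial.X ^ 2)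
        - (Polynomial.C (e 0 1) + Polynomial.C (f 0 1) * Polynomial.X + Polynomial.C (g 0 1) * Polynomial.X ^ 2) * (Polynomial.C (e 2 4) + Polynomial.C (f 2 4) * Polynomial.X + Polynomial.C (g 2 4) * Polynomial.X ^ 2) * (Polynomial.C (e 3 5) + Polynomial.C (f 3 5) * Polynomial.X + Polynomial.C (g 3 5) * Polynomial.X ^ 2)
        + (Polynomial.C (e 0 1) + Polynomial.C (f 0 1) * Polynomial.X + Polynomial.C (g 0 1) * Polynomial.X ^ 2) * (Polynomial.C (e 2 5) + Polynomial.C (f 2 5) * Polynomial.X + Polynomial.C (g 2 5) * Polynomial.X ^ 2) * (Polynomial.C (e 3 4) + Polynomial.C (f 3 4) * Polynomial.X + Polynomial.C (g 3 4) * Polynomial.X ^ 2)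
        - (Polynomial.C (e 0 2) + Polynomial.C (f 0 2) * Polynomial.X + Polynomial.C (g 0 2) * Polynomial.X ^ 2) * (Polynomial.C (e 1 3) + Polynomial.C (f 1 3) * Polynomial.X + Polynomial.C (g 1 3) * Polynomial.X ^ 2) * (Polynomial.C (e 4 5) + Polynomial.C (f 4 5) * Polynomial.X + Polynomial.C (g 4 5) * Polynomial.X ^ 2)
        + (Polynomial.C (e 0 2) + Polynomial.C (f 0 2) * Polynomial.X + Polynomial.C (g 0 2) * Polynomial.X ^ 2) * (Polynomial.C (e 1 4) + Polynomial.C (f 1 4) * Polynomial.X + Polynomial.C (g 1 4) * Polynomial.X ^ 2) * (Polynomial.C (e 3 5) + Polynomial.C (f 3 5) * Polynomial.X + Polynomial.C (g 3 5) * Polynomial.X ^ 2)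
        - (Polynomial.C (e 0 2) + Polynomial.C (f 0 2) * Polynomial.X + Polynomial.C (g 0 2) * Polynomial.X ^ 2) * (Polynomial.C (e 1 5) + Polynomial.C (f 1 5) * Polynomial.X + Polynomial.C (g 1 5) * Polynomial.X ^ 2) * (Polynomial.C (e 3 4) + Polynomial.C (f 3 4) * Polynomial.X + Polynomial.C (g 3 4) * Polynomial.X ^ 2)
        + (Polynomial.C (e 0 3) + Polynomial.C (f 0 3) * Polynomial.X + Polynomial.C (g 0 3) * Polynomial.X ^ 2) * (Polynomial.C (e 1 2) + Polynomial.C (f 1 2) * Polynomial.X + Polynomial.C (g 1 2) * Polynomial.X ^ 2) * (Polynomial.C (e 4 5) + Polynomial.C (f 4 5) * Polynomial.X + Polynomial.C (g 4 5) * Polynomial.X ^ 2)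
        - (Polynomial.C (e 0 3) + Polynomial.C (f 0 3) * Polynomial.X + Polynomial.C (g 0 3) * Polynomial.X ^ 2) * (Polynomial.C (e 1 4) + Polynomial.C (f 1 4) * Polynomial.X + Polynomial.C (g 1 4) * Polynomial.X ^ 2) * (Polynomial.C (e 2 5) + Polynomial.C (f 2 5) * Polynomial.X + Polynomial.C (g 2 5) * Polynomial.X ^ 2)
        + (Polynomial.C (e 0 3) + Polynomial.C (f 0 3) * Polynomial.X + Polynomial.C (g 0 3) * Polynomial.X ^ 2) * (Polynomial.C (e 1 5) + Polynomial.C (f 1 5) * Polynomial.X + Polynomial.C (g 1 5) * Polynomial.X ^ 2) * (Polynomial.C (e 2 4) + Polynomial.C (f 2 4) * Polynomial.X + Polynomial.C (g 2 4) * Polynomial.X ^ 2)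
        - (Polynomial.C (e 0 4) + Polynomial.C (f 0 4) * Polynomial.X + Polynomial.C (g 0 4) * Polynomial.X ^ 2) * (Polynomial.C (e 1 2) + Polynomial.C (f 1 2) * Polynomial.X + Polynomial.C (g 1 2) * Polynomial.X ^ 2) * (Polynomial.C (e 3 5) + Polynomial.C (f 3 5) * Polynomial.X + Polynomial.C (g 3 5) * Polynomial.X ^ 2)
        + (Polynomial.C (e 0 4) + Polynomial.C (f 0 4) * Polynomial.X + Polynomial.C (g 0 4) * Polynomial.X ^ 2) * (Polynomial.C (e 1 3) + Polynomial.C (f 1 3) * Polynomial.X + Polynomial.C (g 1 3) * Polynomial.X ^ 2) * (Polynomial.C (e 2 5) + Polynomial.C (f 2 5) * Polynomial.X + Polynomial.C (g 2 5) * Polynomial.X ^ 2)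
        - (Polynomial.C (e 0 4) + Polynomial.C (f 0 4) * Polynomial.X + Polynomial.C (g 0 4) * Polynomial.X ^ 2) * (Polynomial.C (e 1 5) + Polynomial.C (f 1 5) * Polynomial.X + Polynomial.C (g 1 5) * Polynomial.X ^ 2) * (Polynomial.C (e 2 3) + Polynomial.C (f 2 3) * Polynomial.X + Polynomial.C (g 2 3) * Polynomial.X ^ 2)
        + (Polynomial.C (e 0 5) + Polynomial.C (f 0 5) * Polynomial.X + Polynomial.C (g 0 5) * Polynomial.X ^ 2) * (Polynomial.C (e 1 2) + Polynomial.C (f 1 2) * Polynomial.X + Polynomial.C (g 1 2) * Polynomial.X ^ 2) * (Polynomial.C (e 3 4) + Polynomial.C (f 3 4) * Polynomial.X + Polynomial.C (g 3 4) * Polynomial.X ^ 2)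
        - (Polynomial.C (e 0 5) + Polynomial.C (f 0 5) * Polynomial.X + Polynomial.C (g 0 5) * Polynomial.X ^ 2) * (Polynomial.C (e 1 3) + Polynomial.C (f 1 3) * Polynomial.X + Polynomial.C (g 1 3) * Polynomial.X ^ 2) * (Polynomial.C (e 2 4) + Polynomial.C (f 2 4) * Polynomial.X + Polynomial.C (g 2 4) * Polynomial.X ^ 2)
        + (Polynomial.C (e 0 5) + Polynomial.C (f 0 5) * Polynomial.X + Polynomial.C (g 0 5) * Polynomial.X ^ 2) * (Polynomial.C (e 1 4) + Polynomial.C (f 1 4) * Polynomial.X + Polynomial.C (g 1 4) * Polynomial.X ^ 2) * (Polynomial.C (e 2 3) + Polynomial.C (f 2 3) * Polynomial.X + Polynomial.C (g 2 3) * Polynomial.X ^ 2) := by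
    rw [pf_explicit]
    simp only [Matrix.of_apply]
    ring
  rw [hf]
  constructor
  · simp only [Polynomial.coeff_add, Polynomial.coeff_sub, coeff1_triple, coeff2_triple,
      Polynomial.coeff_zero]
    ring
  · simp only [Polynomial.coeff_add, Polynomial.coeff_sub, coeff1_triple, coeff2_triple,
      Polynomial.coeff_zero]
    ring

theorem pf_ringHom_comm {A B : Type*} [CommRing A] [CommRing B] (φ : A →+* B)
    (N : Matrix (Fin 6) (Fin 6) A) :
    pf (Matrix.of fun i j => φ (N i j)) = φ (pf N) := by
  simp only [pf_explicit, Matrix.of_apply, _root_.map_add, _root_.map_sub, _root_.map_mul]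

theorem entry_map {A B : Type*} [CommRing A] [CommRing B] (φ : A →+* B) (u v w : A) :
    Polynomial.map φ (Polynomial.C u + Polynomial.C v * Polynomial.X
      + Polynomial.C w * Polynomial.X ^ 2)
    = Polynomial.C (φ u) + Polynomial.C (φ v) * Polynomial.X
      + Polynomial.C (φ w) * Polynomial.X ^ 2 := by
  simp

set_option maxHeartbeats 4000000 in
/-- Proposition 2.5 (Table 2, row (c)): the listed quadrics in the coefficients of a tangent
direction `M'` vanish on the directions admitting a lift to a `2`-jet inside the locus of
skew matrices with vanishing Pfaffian. -/
theorem tangent_cone_quadrics_type_c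
    (M M' M'' : Matrix (Fin 6) (Fin 6) Rp)
    (hM : M = !![0, X 0, X 1, 0, 0, 0;
                 -X 0, 0, X 2, 0, 0, 0;
                 -X 1, -X 2, 0, 0, 0, 0;
                 0, 0, 0, 0, X 1, X 2;
                 0, 0, 0, -X 1, 0, X 3;
                 0, 0, 0, -X 2, -X 3, 0])
    (hskew' : M'ᵀ = -M') (hlin' : ∀ i j, (M' i j).IsHomogeneous 1)
    (hskew'' : M''ᵀ = -M'') (hlin'' : ∀ i j, (M'' i j).IsHomogeneous 1)
    (a : Fin 6 → Fin 6 → Fin 5 → ℂ)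
    (ha : ∀ i j : Fin 6, i < j → M' i j = ∑ k : Fin 5, MvPolynomial.C (a i j k) * X k)
    (hjet : pf (jet2 M M' M'') = 0) :
    (a 1 2 4 - a 3 5 4) * a 0 5 4 = 0 ∧ (a 0 2 4 - a 3 4 4) * a 0 5 4 = 0 := by
  rw [hM] at hjet
  clear hM
  set MM : Matrix (Fin 6) (Fin 6) Rp := !![0, X 0, X 1, 0, 0, 0;
                 -X 0, 0, X 2, 0, 0, 0;
                 -X 1, -X 2, 0, 0, 0, 0;
                 0, 0, 0, 0, X 1, X 2;
                 0, 0, 0, -X 1, 0, X 3;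
                 0, 0, 0, -X 2, -X 3, 0] with hMM
  have hm01 : MM 0 1 = (X 0 : Rp) := by rw [hMM]; exact rfl
  have hm02 : MM 0 2 = (X 1 : Rp) := by rw [hMM]; exact rfl
  have hm03 : MM 0 3 = (0 : Rp) := by rw [hMM]; exact rfl
  have hm04 : MM 0 4 = (0 : Rp) := by rw [hMM]; exact rfl
  have hm05 : MM 0 5 = (0 : Rp) := by rw [hMM]; exact rfl
  have hm12 : MM 1 2 = (X 2 : Rp) := by rw [hMM]; exact rfl
  have hm13 : MM 1 3 = (0 : Rp) := by rw [hMM]; exact rfl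
  have hm14 : MM 1 4 = (0 : Rp) := by rw [hMM]; exact rfl
  have hm15 : MM 1 5 = (0 : Rp) := by rw [hMM]; exact rfl
  have hm23 : MM 2 3 = (0 : Rp) := by rw [hMM]; exact rfl
  have hm24 : MM 2 4 = (0 : Rp) := by rw [hMM]; exact rfl
  have hm25 : MM 2 5 = (0 : Rp) := by rw [hMM]; exact rfl
  have hm34 : MM 3 4 = (X 1 : Rp) := by rw [hMM]; exact rfl
  have hm35 : MM 3 5 = (X 2 : Rp) := by rw [hMM]; exact rfl
  have hm45 : MM 4 5 = (X 3 : Rp) := by rw [hMM]; exact rfl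
  obtain ⟨g, hMpp⟩ : ∃ g : Fin 6 → Fin 6 → Fin 5 → ℂ,
      ∀ i j, M'' i j = ∑ v : Fin 5, C (g i j v) * X v :=
    ⟨_, fun i j => homogOne_eq_sum _ (hlin'' i j)⟩
  set NB : Matrix (Fin 6) (Fin 6) (Polynomial Rp) := Matrix.of fun i j =>
    Polynomial.C (MM i j) + Polynomial.C (M' i j) * Polynomial.X
      + Polynomial.C (M'' i j) * Polynomial.X ^ 2 with hNB
  have hquot : Ideal.Quotient.mk (Ideal.span {(Polynomial.X : Polynomial Rp) ^ 3}) (pf NB) = 0 := by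
    rw [← pf_ringHom_comm (B := Reps3) (Ideal.Quotient.mk (Ideal.span {(Polynomial.X : Polynomial Rp) ^ 3})) NB]
    exact hjet
  obtain ⟨q, hq⟩ : (Polynomial.X : Polynomial Rp) ^ 3 ∣ pf NB := by
    rwa [Ideal.Quotient.eq_zero_iff_mem, Ideal.mem_span_singleton] at hquot
  have hS : ∀ p0 p1 p2 p3 p4 : ℂ,
      ((0:ℂ) + 1 * (p2) * (p3) * (p4) * (a 0 3 4) + 1 * (p2) * (p3) * (p3) * (a 0 3 3) - 1 * (p2) * (p2) * (p4) * (a 0 4 4) - 1 * (p2) * (p2) * (p3) * (a 0 4 3) + 1 * (p2) * (p2) * (p3) * (a 0 3 2) - 1 * (p2) * (p2) * (p2) * (a 0 4 2) - 1 * (p1) * (p3) * (p4) * (a 1 3 4) - 1 * (p1) * (p3) * (p3) * (a 1 3 3) + 1 * (p1) * (p2) * (p4) * (a 1 4 4) + 1 * (p1) * (p2) * (p4) * (a 0 5 4) + 1 * (p1) * (p2) * (p3) * (a 1 4 3) - 1 * (p1) * (p2) * (p3) * (a 1 3 2) + 1 * (p1) * (p2) * (p3) * (a 0 5 3) + 1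 * (p1) * (p2) * (p3) * (a 0 3 1) + 1 * (p1) * (p2) * (p2) * (a 1 4 2) + 1 * (p1) * (p2) * (p2) * (a 0 5 2) - 1 * (p1) * (p2) * (p2) * (a 0 4 1) - 1 * (p1) * (p1) * (p4) * (a 1 5 4) - 1 * (p1) * (p1) * (p3) * (a 1 5 3) - 1 * (p1) * (p1) * (p3) * (a 1 3 1) - 1 * (p1) * (p1) * (p2) * (a 1 5 2) + 1 * (p1) * (p1) * (p2) * (a 1 4 1) + 1 * (p1) * (p1) * (p2) * (a 0 5 1) - 1 * (p1) * (p1) * (p1) * (a 1 5 1) + 1 * (p0) * (p3) * (p4) * (a 2 3 4) + 1 * (p0) * (p3) * (p3) * (a 2 3 3) - 1 * (p0) * (p2) * (p4) * (a 2 4 4) - 1 * (p0) * (p2) * (p3) * (a 2 4 3) + 1 * (p0) * (p2) * (p3) * (a 2 3 2) + 1 * (p0) * (p2) * (p3) * (a 0 3 0) - 1 * (p0) * (p2) * (p2) * (a 2 4 2) - 1 * (p0) * (p2) * (p2) * (a 0 4 0) + 1 * (p0) * (p1) * (p4) * (a 2 5 4) + 1 * (p0) * (p1) * (p3) * (a 2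 5 3) + 1 * (p0) * (p1) * (p3) * (a 2 3 1) - 1 * (p0) * (p1) * (p3) * (a 1 3 0) + 1 * (p0) * (p1) * (p2) * (a 2 5 2) - 1 * (p0) * (p1) * (p2) * (a 2 4 1) + 1 * (p0) * (p1) * (p2) * (a 1 4 0) + 1 * (p0) * (p1) * (p2) * (a 0 5 0) + 1 * (p0) * (p1) * (p1) * (a 2 5 1) - 1 * (p0) * (p1) * (p1) * (a 1 5 0) + 1 * (p0) * (p0) * (p3) * (a 2 3 0) - 1 * (p0) * (p0) * (p2) * (a 2 4 0) + 1 * (p0) * (p0) * (p1) * (a 2 5 0)) = 0 ∧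
      ((0:ℂ) + 1 * (p3) * (p4) * (p4) * (a 0 3 4) * (a 1 2 4) - 1 * (p3) * (p4) * (p4) * (a 0 2 4) * (a 1 3 4) + 1 * (p3) * (p4) * (p4) * (a 0 1 4) * (a 2 3 4) + 1 * (p3) * (p3) * (p4) * (a 0 3 4) * (a 1 2 3) + 1 * (p3) * (p3) * (p4) * (a 0 3 3) * (a 1 2 4) - 1 * (p3) * (p3) * (p4) * (a 0 2 4) * (a 1 3 3) - 1 * (p3) * (p3) * (p4) * (a 0 2 3) * (a 1 3 4) + 1 * (p3) * (p3) * (p4) * (a 0 1 4) * (a 2 3 3) + 1 * (p3) * (p3) * (p4) * (a 0 1 3) * (a 2 3 4) + 1 * (p3) * (p3) * (p3) * (a 0 3 3) * (a 1 2 3) - 1 * (p3) * (p3) * (p3) * (a 0 2 3) * (a 1 3 3) + 1 * (p3) * (p3) * (p3) * (a 0 1 3) * (a 2 3 3) + 1 * (p2) * (p4) * (p4) * (a 0 5 4) * (a 3 4 4) - 1 * (p2) * (p4) * (p4) * (a 0 4 4) * (a 3 5 4) - 1 * (p2) * (p4) * (p4) * (a 0 4 4) * (a 1 2 4) + 1 *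 (p2) * (p4) * (p4) * (a 0 3 4) * (a 4 5 4) + 1 * (p2) * (p4) * (p4) * (a 0 2 4) * (a 1 4 4) - 1 * (p2) * (p4) * (p4) * (a 0 1 4) * (a 2 4 4) + 1 * (p2) * (p3) * (p4) * (a 0 5 4) * (a 3 4 3) + 1 * (p2) * (p3) * (p4) * (a 0 5 3) * (a 3 4 4) - 1 * (p2) * (p3) * (p4) * (a 0 4 4) * (a 3 5 3) - 1 * (p2) * (p3) * (p4) * (a 0 4 4) * (a 1 2 3) - 1 * (p2) * (p3) * (p4) * (a 0 4 3) * (a 3 5 4) - 1 * (p2) * (p3) * (p4) * (a 0 4 3) * (a 1 2 4) + 1 * (p2) * (p3) * (p4) * (g 0 3 4) + 1 * (p2) * (p3) * (p4) * (a 0 3 4) * (a 4 5 3) + 1 * (p2) * (p3) * (p4) * (a 0 3 4) * (a 1 2 2) + 1 * (p2) * (p3) * (p4) * (a 0 3 3) * (a 4 5 4) + 1 * (p2) * (p3) * (p4) * (a 0 3 2) * (a 1 2 4) + 1 * (p2) * (p3) * (p4) * (a 0 2 4) * (a 1 4 3) - 1 * (p2) * (p3) * (p4) * (a 0 2 4)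 * (a 1 3 2) + 1 * (p2) * (p3) * (p4) * (a 0 2 3) * (a 1 4 4) - 1 * (p2) * (p3) * (p4) * (a 0 2 2) * (a 1 3 4) - 1 * (p2) * (p3) * (p4) * (a 0 1 4) * (a 2 4 3) + 1 * (p2) * (p3) * (p4) * (a 0 1 4) * (a 2 3 2) - 1 * (p2) * (p3) * (p4) * (a 0 1 3) * (a 2 4 4) + 1 * (p2) * (p3) * (p4) * (a 0 1 2) * (a 2 3 4) + 1 * (p2) * (p3) * (p3) * (a 0 5 3) * (a 3 4 3) - 1 * (p2) * (p3) * (p3) * (a 0 4 3) * (a 3 5 3) - 1 * (p2) * (p3) * (p3) * (a 0 4 3) * (a 1 2 3) + 1 * (p2) * (p3) * (p3) * (g 0 3 3) + 1 * (p2) * (p3) * (p3) * (a 0 3 3) * (a 4 5 3) + 1 * (p2) * (p3) * (p3) * (a 0 3 3) * (a 1 2 2) + 1 * (p2) * (p3) * (p3) * (a 0 3 2) * (a 1 2 3) + 1 * (p2) * (p3) * (p3) * (a 0 2 3) * (a 1 4 3) - 1 * (p2) * (p3) * (p3) * (a 0 2 3) * (a 1 3 2) - 1 * (p2) * (p3)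 * (p3) * (a 0 2 2) * (a 1 3 3) - 1 * (p2) * (p3) * (p3) * (a 0 1 3) * (a 2 4 3) + 1 * (p2) * (p3) * (p3) * (a 0 1 3) * (a 2 3 2) + 1 * (p2) * (p3) * (p3) * (a 0 1 2) * (a 2 3 3) + 1 * (p2) * (p2) * (p4) * (a 0 5 4) * (a 3 4 2) + 1 * (p2) * (p2) * (p4) * (a 0 5 2) * (a 3 4 4) - 1 * (p2) * (p2) * (p4) * (g 0 4 4) - 1 * (p2) * (p2) * (p4) * (a 0 4 4) * (a 3 5 2) - 1 * (p2) * (p2) * (p4) * (a 0 4 4) * (a 1 2 2) - 1 * (p2) * (p2) * (p4) * (a 0 4 2) * (a 3 5 4) - 1 * (p2) * (p2) * (p4) * (a 0 4 2) * (a 1 2 4) + 1 * (p2) * (p2) * (p4) * (a 0 3 4) * (a 4 5 2) + 1 * (p2) * (p2) * (p4) * (a 0 3 2) * (a 4 5 4) + 1 * (p2) * (p2) * (p4) * (a 0 2 4) * (a 1 4 2) + 1 * (p2) * (p2) * (p4) * (a 0 2 2) * (a 1 4 4) - 1 * (p2) * (p2) * (p4) * (a 0 1 4) * (a 2 4 2)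 - 1 * (p2) * (p2) * (p4) * (a 0 1 2) * (a 2 4 4) + 1 * (p2) * (p2) * (p3) * (a 0 5 3) * (a 3 4 2) + 1 * (p2) * (p2) * (p3) * (a 0 5 2) * (a 3 4 3) - 1 * (p2) * (p2) * (p3) * (g 0 4 3) - 1 * (p2) * (p2) * (p3) * (a 0 4 3) * (a 3 5 2) - 1 * (p2) * (p2) * (p3) * (a 0 4 3) * (a 1 2 2) - 1 * (p2) * (p2) * (p3) * (a 0 4 2) * (a 3 5 3) - 1 * (p2) * (p2) * (p3) * (a 0 4 2) * (a 1 2 3) + 1 * (p2) * (p2) * (p3) * (a 0 3 3) * (a 4 5 2) + 1 * (p2) * (p2) * (p3) * (g 0 3 2) + 1 * (p2) * (p2) * (p3) * (a 0 3 2) * (a 4 5 3) + 1 * (p2) * (p2) * (p3) * (a 0 3 2) * (a 1 2 2) + 1 * (p2) * (p2) * (p3) * (a 0 2 3) * (a 1 4 2) + 1 * (p2) * (p2) * (p3) * (a 0 2 2) * (a 1 4 3) - 1 * (p2) * (p2) * (p3) * (a 0 2 2) * (a 1 3 2) - 1 * (p2) * (p2) * (p3) * (a 0 1 3) * (a 2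 4 2) - 1 * (p2) * (p2) * (p3) * (a 0 1 2) * (a 2 4 3) + 1 * (p2) * (p2) * (p3) * (a 0 1 2) * (a 2 3 2) + 1 * (p2) * (p2) * (p2) * (a 0 5 2) * (a 3 4 2) - 1 * (p2) * (p2) * (p2) * (g 0 4 2) - 1 * (p2) * (p2) * (p2) * (a 0 4 2) * (a 3 5 2) - 1 * (p2) * (p2) * (p2) * (a 0 4 2) * (a 1 2 2) + 1 * (p2) * (p2) * (p2) * (a 0 3 2) * (a 4 5 2) + 1 * (p2) * (p2) * (p2) * (a 0 2 2) * (a 1 4 2) - 1 * (p2) * (p2) * (p2) * (a 0 1 2) * (a 2 4 2) - 1 * (p1) * (p4) * (p4) * (a 1 5 4) * (a 3 4 4) + 1 * (p1) * (p4) * (p4) * (a 1 4 4) * (a 3 5 4) - 1 * (p1) * (p4) * (p4) * (a 1 3 4) * (a 4 5 4) + 1 * (p1) * (p4) * (p4) * (a 0 5 4) * (a 1 2 4) - 1 * (p1) * (p4) * (p4) * (a 0 2 4) * (a 1 5 4) + 1 * (p1) * (p4) * (p4) * (a 0 1 4) * (a 2 5 4) - 1 * (p1) * (p3) * (p4) *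 (a 1 5 4) * (a 3 4 3) - 1 * (p1) * (p3) * (p4) * (a 1 5 3) * (a 3 4 4) + 1 * (p1) * (p3) * (p4) * (a 1 4 4) * (a 3 5 3) + 1 * (p1) * (p3) * (p4) * (a 1 4 3) * (a 3 5 4) - 1 * (p1) * (p3) * (p4) * (g 1 3 4) - 1 * (p1) * (p3) * (p4) * (a 1 3 4) * (a 4 5 3) - 1 * (p1) * (p3) * (p4) * (a 1 3 3) * (a 4 5 4) + 1 * (p1) * (p3) * (p4) * (a 0 5 4) * (a 1 2 3) + 1 * (p1) * (p3) * (p4) * (a 0 5 3) * (a 1 2 4) + 1 * (p1) * (p3) * (p4) * (a 0 3 4) * (a 1 2 1) + 1 * (p1) * (p3) * (p4) * (a 0 3 1) * (a 1 2 4) - 1 * (p1) * (p3) * (p4) * (a 0 2 4) * (a 1 5 3) - 1 * (p1) * (p3) * (p4) * (a 0 2 4) * (a 1 3 1) - 1 * (p1) * (p3) * (p4) * (a 0 2 3) * (a 1 5 4) - 1 * (p1) * (p3) * (p4) * (a 0 2 1) * (a 1 3 4) + 1 * (p1) * (p3) * (p4) * (a 0 1 4) * (a 2 5 3) + 1 *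 (p1) * (p3) * (p4) * (a 0 1 4) * (a 2 3 1) + 1 * (p1) * (p3) * (p4) * (a 0 1 3) * (a 2 5 4) + 1 * (p1) * (p3) * (p4) * (a 0 1 1) * (a 2 3 4) - 1 * (p1) * (p3) * (p3) * (a 1 5 3) * (a 3 4 3) + 1 * (p1) * (p3) * (p3) * (a 1 4 3) * (a 3 5 3) - 1 * (p1) * (p3) * (p3) * (g 1 3 3) - 1 * (p1) * (p3) * (p3) * (a 1 3 3) * (a 4 5 3) + 1 * (p1) * (p3) * (p3) * (a 0 5 3) * (a 1 2 3) + 1 * (p1) * (p3) * (p3) * (a 0 3 3) * (a 1 2 1) + 1 * (p1) * (p3) * (p3) * (a 0 3 1) * (a 1 2 3) - 1 * (p1) * (p3) * (p3) * (a 0 2 3) * (a 1 5 3) - 1 * (p1) * (p3) * (p3) * (a 0 2 3) * (a 1 3 1) - 1 * (p1) * (p3) * (p3) * (a 0 2 1) * (a 1 3 3) + 1 * (p1) * (p3) * (p3) * (a 0 1 3) * (a 2 5 3) + 1 * (p1) * (p3) * (p3) * (a 0 1 3) * (a 2 3 1) + 1 * (p1) * (p3) * (p3) * (a 0 1 1)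 * (a 2 3 3) - 1 * (p1) * (p2) * (p4) * (a 1 5 4) * (a 3 4 2) - 1 * (p1) * (p2) * (p4) * (a 1 5 2) * (a 3 4 4) + 1 * (p1) * (p2) * (p4) * (g 1 4 4) + 1 * (p1) * (p2) * (p4) * (a 1 4 4) * (a 3 5 2) + 1 * (p1) * (p2) * (p4) * (a 1 4 2) * (a 3 5 4) - 1 * (p1) * (p2) * (p4) * (a 1 3 4) * (a 4 5 2) - 1 * (p1) * (p2) * (p4) * (a 1 3 2) * (a 4 5 4) + 1 * (p1) * (p2) * (p4) * (g 0 5 4) + 1 * (p1) * (p2) * (p4) * (a 0 5 4) * (a 3 4 1) + 1 * (p1) * (p2) * (p4) * (a 0 5 4) * (a 1 2 2) + 1 * (p1) * (p2) * (p4) * (a 0 5 2) * (a 1 2 4) + 1 * (p1) * (p2) * (p4) * (a 0 5 1) * (a 3 4 4) - 1 * (p1) * (p2) * (p4) * (a 0 4 4) * (a 3 5 1) - 1 * (p1) * (p2) * (p4) * (a 0 4 4) * (a 1 2 1) - 1 * (p1) * (p2) * (p4) * (a 0 4 1) * (a 3 5 4) - 1 * (p1) * (p2) * (p4) * (a 0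 4 1) * (a 1 2 4) + 1 * (p1) * (p2) * (p4) * (a 0 3 4) * (a 4 5 1) + 1 * (p1) * (p2) * (p4) * (a 0 3 1) * (a 4 5 4) - 1 * (p1) * (p2) * (p4) * (a 0 2 4) * (a 1 5 2) + 1 * (p1) * (p2) * (p4) * (a 0 2 4) * (a 1 4 1) - 1 * (p1) * (p2) * (p4) * (a 0 2 2) * (a 1 5 4) + 1 * (p1) * (p2) * (p4) * (a 0 2 1) * (a 1 4 4) + 1 * (p1) * (p2) * (p4) * (a 0 1 4) * (a 2 5 2) - 1 * (p1) * (p2) * (p4) * (a 0 1 4) * (a 2 4 1) + 1 * (p1) * (p2) * (p4) * (a 0 1 2) * (a 2 5 4) - 1 * (p1) * (p2) * (p4) * (a 0 1 1) * (a 2 4 4) - 1 * (p1) * (p2) * (p3) * (a 1 5 3) * (a 3 4 2) - 1 * (p1) * (p2) * (p3) * (a 1 5 2) * (a 3 4 3) + 1 * (p1) * (p2) * (p3) * (g 1 4 3) + 1 * (p1) * (p2) * (p3) * (a 1 4 3) * (a 3 5 2) + 1 * (p1) * (p2) * (p3) * (a 1 4 2) * (a 3 5 3) - 1 * (p1) *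 (p2) * (p3) * (a 1 3 3) * (a 4 5 2) - 1 * (p1) * (p2) * (p3) * (g 1 3 2) - 1 * (p1) * (p2) * (p3) * (a 1 3 2) * (a 4 5 3) + 1 * (p1) * (p2) * (p3) * (g 0 5 3) + 1 * (p1) * (p2) * (p3) * (a 0 5 3) * (a 3 4 1) + 1 * (p1) * (p2) * (p3) * (a 0 5 3) * (a 1 2 2) + 1 * (p1) * (p2) * (p3) * (a 0 5 2) * (a 1 2 3) + 1 * (p1) * (p2) * (p3) * (a 0 5 1) * (a 3 4 3) - 1 * (p1) * (p2) * (p3) * (a 0 4 3) * (a 3 5 1) - 1 * (p1) * (p2) * (p3) * (a 0 4 3) * (a 1 2 1) - 1 * (p1) * (p2) * (p3) * (a 0 4 1) * (a 3 5 3) - 1 * (p1) * (p2) * (p3) * (a 0 4 1) * (a 1 2 3) + 1 * (p1) * (p2) * (p3) * (a 0 3 3) * (a 4 5 1) + 1 * (p1) * (p2) * (p3) * (a 0 3 2) * (a 1 2 1) + 1 * (p1) * (p2) * (p3) * (g 0 3 1) + 1 * (p1) * (p2) * (p3) * (a 0 3 1) * (a 4 5 3) + 1 * (p1) * (p2) *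 (p3) * (a 0 3 1) * (a 1 2 2) - 1 * (p1) * (p2) * (p3) * (a 0 2 3) * (a 1 5 2) + 1 * (p1) * (p2) * (p3) * (a 0 2 3) * (a 1 4 1) - 1 * (p1) * (p2) * (p3) * (a 0 2 2) * (a 1 5 3) - 1 * (p1) * (p2) * (p3) * (a 0 2 2) * (a 1 3 1) + 1 * (p1) * (p2) * (p3) * (a 0 2 1) * (a 1 4 3) - 1 * (p1) * (p2) * (p3) * (a 0 2 1) * (a 1 3 2) + 1 * (p1) * (p2) * (p3) * (a 0 1 3) * (a 2 5 2) - 1 * (p1) * (p2) * (p3) * (a 0 1 3) * (a 2 4 1) + 1 * (p1) * (p2) * (p3) * (a 0 1 2) * (a 2 5 3) + 1 * (p1) * (p2) * (p3) * (a 0 1 2) * (a 2 3 1) - 1 * (p1) * (p2) * (p3) * (a 0 1 1) * (a 2 4 3) + 1 * (p1) * (p2) * (p3) * (a 0 1 1) * (a 2 3 2) - 1 * (p1) * (p2) * (p2) * (a 1 5 2) * (a 3 4 2) + 1 * (p1) * (p2) * (p2) * (g 1 4 2) + 1 * (p1) * (p2) * (p2) * (a 1 4 2) * (a 3 5 2)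 - 1 * (p1) * (p2) * (p2) * (a 1 3 2) * (a 4 5 2) + 1 * (p1) * (p2) * (p2) * (g 0 5 2) + 1 * (p1) * (p2) * (p2) * (a 0 5 2) * (a 3 4 1) + 1 * (p1) * (p2) * (p2) * (a 0 5 2) * (a 1 2 2) + 1 * (p1) * (p2) * (p2) * (a 0 5 1) * (a 3 4 2) - 1 * (p1) * (p2) * (p2) * (a 0 4 2) * (a 3 5 1) - 1 * (p1) * (p2) * (p2) * (a 0 4 2) * (a 1 2 1) - 1 * (p1) * (p2) * (p2) * (g 0 4 1) - 1 * (p1) * (p2) * (p2) * (a 0 4 1) * (a 3 5 2) - 1 * (p1) * (p2) * (p2) * (a 0 4 1) * (a 1 2 2) + 1 * (p1) * (p2) * (p2) * (a 0 3 2) * (a 4 5 1) + 1 * (p1) * (p2) * (p2) * (a 0 3 1) * (a 4 5 2) - 1 * (p1) * (p2) * (p2) * (a 0 2 2) * (a 1 5 2) + 1 * (p1) * (p2) * (p2) * (a 0 2 2) * (a 1 4 1) + 1 * (p1) * (p2) * (p2) * (a 0 2 1) * (a 1 4 2) + 1 * (p1) * (p2) * (p2) * (a 0 1 2) * (a 2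 5 2) - 1 * (p1) * (p2) * (p2) * (a 0 1 2) * (a 2 4 1) - 1 * (p1) * (p2) * (p2) * (a 0 1 1) * (a 2 4 2) - 1 * (p1) * (p1) * (p4) * (g 1 5 4) - 1 * (p1) * (p1) * (p4) * (a 1 5 4) * (a 3 4 1) - 1 * (p1) * (p1) * (p4) * (a 1 5 1) * (a 3 4 4) + 1 * (p1) * (p1) * (p4) * (a 1 4 4) * (a 3 5 1) + 1 * (p1) * (p1) * (p4) * (a 1 4 1) * (a 3 5 4) - 1 * (p1) * (p1) * (p4) * (a 1 3 4) * (a 4 5 1) - 1 * (p1) * (p1) * (p4) * (a 1 3 1) * (a 4 5 4) + 1 * (p1) * (p1) * (p4) * (a 0 5 4) * (a 1 2 1) + 1 * (p1) * (p1) * (p4) * (a 0 5 1) * (a 1 2 4) - 1 * (p1) * (p1) * (p4) * (a 0 2 4) * (a 1 5 1) - 1 * (p1) * (p1) * (p4) * (a 0 2 1) * (a 1 5 4) + 1 * (p1) * (p1) * (p4) * (a 0 1 4) * (a 2 5 1) + 1 * (p1) * (p1) * (p4) * (a 0 1 1) * (a 2 5 4) - 1 * (p1) * (p1) * (p3) *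 (g 1 5 3) - 1 * (p1) * (p1) * (p3) * (a 1 5 3) * (a 3 4 1) - 1 * (p1) * (p1) * (p3) * (a 1 5 1) * (a 3 4 3) + 1 * (p1) * (p1) * (p3) * (a 1 4 3) * (a 3 5 1) + 1 * (p1) * (p1) * (p3) * (a 1 4 1) * (a 3 5 3) - 1 * (p1) * (p1) * (p3) * (a 1 3 3) * (a 4 5 1) - 1 * (p1) * (p1) * (p3) * (g 1 3 1) - 1 * (p1) * (p1) * (p3) * (a 1 3 1) * (a 4 5 3) + 1 * (p1) * (p1) * (p3) * (a 0 5 3) * (a 1 2 1) + 1 * (p1) * (p1) * (p3) * (a 0 5 1) * (a 1 2 3) + 1 * (p1) * (p1) * (p3) * (a 0 3 1) * (a 1 2 1) - 1 * (p1) * (p1) * (p3) * (a 0 2 3) * (a 1 5 1) - 1 * (p1) * (p1) * (p3) * (a 0 2 1) * (a 1 5 3) - 1 * (p1) * (p1) * (p3) * (a 0 2 1) * (a 1 3 1) + 1 * (p1) * (p1) * (p3) * (a 0 1 3) * (a 2 5 1) + 1 * (p1) * (p1) * (p3) * (a 0 1 1) * (a 2 5 3) + 1 * (p1) * (p1) *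 (p3) * (a 0 1 1) * (a 2 3 1) - 1 * (p1) * (p1) * (p2) * (g 1 5 2) - 1 * (p1) * (p1) * (p2) * (a 1 5 2) * (a 3 4 1) - 1 * (p1) * (p1) * (p2) * (a 1 5 1) * (a 3 4 2) + 1 * (p1) * (p1) * (p2) * (a 1 4 2) * (a 3 5 1) + 1 * (p1) * (p1) * (p2) * (g 1 4 1) + 1 * (p1) * (p1) * (p2) * (a 1 4 1) * (a 3 5 2) - 1 * (p1) * (p1) * (p2) * (a 1 3 2) * (a 4 5 1) - 1 * (p1) * (p1) * (p2) * (a 1 3 1) * (a 4 5 2) + 1 * (p1) * (p1) * (p2) * (a 0 5 2) * (a 1 2 1) + 1 * (p1) * (p1) * (p2) * (g 0 5 1) + 1 * (p1) * (p1) * (p2) * (a 0 5 1) * (a 3 4 1) + 1 * (p1) * (p1) * (p2) * (a 0 5 1) * (a 1 2 2) - 1 * (p1) * (p1) * (p2) * (a 0 4 1) * (a 3 5 1) - 1 * (p1) * (p1) * (p2) * (a 0 4 1) * (a 1 2 1) + 1 * (p1) * (p1) * (p2) * (a 0 3 1) * (a 4 5 1) - 1 * (p1) * (p1) * (p2) *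 (a 0 2 2) * (a 1 5 1) - 1 * (p1) * (p1) * (p2) * (a 0 2 1) * (a 1 5 2) + 1 * (p1) * (p1) * (p2) * (a 0 2 1) * (a 1 4 1) + 1 * (p1) * (p1) * (p2) * (a 0 1 2) * (a 2 5 1) + 1 * (p1) * (p1) * (p2) * (a 0 1 1) * (a 2 5 2) - 1 * (p1) * (p1) * (p2) * (a 0 1 1) * (a 2 4 1) - 1 * (p1) * (p1) * (p1) * (g 1 5 1) - 1 * (p1) * (p1) * (p1) * (a 1 5 1) * (a 3 4 1) + 1 * (p1) * (p1) * (p1) * (a 1 4 1) * (a 3 5 1) - 1 * (p1) * (p1) * (p1) * (a 1 3 1) * (a 4 5 1) + 1 * (p1) * (p1) * (p1) * (a 0 5 1) * (a 1 2 1) - 1 * (p1) * (p1) * (p1) * (a 0 2 1) * (a 1 5 1) + 1 * (p1) * (p1) * (p1) * (a 0 1 1) * (a 2 5 1) + 1 * (p0) * (p4) * (p4) * (a 2 5 4) * (a 3 4 4) - 1 * (p0) * (p4) * (p4) * (a 2 4 4) * (a 3 5 4) + 1 * (p0) * (p4) * (p4) * (a 2 3 4) * (a 4 5 4) + 1 *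 (p0) * (p3) * (p4) * (a 2 5 4) * (a 3 4 3) + 1 * (p0) * (p3) * (p4) * (a 2 5 3) * (a 3 4 4) - 1 * (p0) * (p3) * (p4) * (a 2 4 4) * (a 3 5 3) - 1 * (p0) * (p3) * (p4) * (a 2 4 3) * (a 3 5 4) + 1 * (p0) * (p3) * (p4) * (g 2 3 4) + 1 * (p0) * (p3) * (p4) * (a 2 3 4) * (a 4 5 3) + 1 * (p0) * (p3) * (p4) * (a 2 3 3) * (a 4 5 4) + 1 * (p0) * (p3) * (p4) * (a 0 3 4) * (a 1 2 0) + 1 * (p0) * (p3) * (p4) * (a 0 3 0) * (a 1 2 4) - 1 * (p0) * (p3) * (p4) * (a 0 2 4) * (a 1 3 0) - 1 * (p0) * (p3) * (p4) * (a 0 2 0) * (a 1 3 4) + 1 * (p0) * (p3) * (p4) * (a 0 1 4) * (a 2 3 0) + 1 * (p0) * (p3) * (p4) * (a 0 1 0) * (a 2 3 4) + 1 * (p0) * (p3) * (p3) * (a 2 5 3) * (a 3 4 3) - 1 * (p0) * (p3) * (p3) * (a 2 4 3) * (a 3 5 3) + 1 * (p0) * (p3) * (p3) * (g 2 3 3)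 + 1 * (p0) * (p3) * (p3) * (a 2 3 3) * (a 4 5 3) + 1 * (p0) * (p3) * (p3) * (a 0 3 3) * (a 1 2 0) + 1 * (p0) * (p3) * (p3) * (a 0 3 0) * (a 1 2 3) - 1 * (p0) * (p3) * (p3) * (a 0 2 3) * (a 1 3 0) - 1 * (p0) * (p3) * (p3) * (a 0 2 0) * (a 1 3 3) + 1 * (p0) * (p3) * (p3) * (a 0 1 3) * (a 2 3 0) + 1 * (p0) * (p3) * (p3) * (a 0 1 0) * (a 2 3 3) + 1 * (p0) * (p2) * (p4) * (a 2 5 4) * (a 3 4 2) + 1 * (p0) * (p2) * (p4) * (a 2 5 2) * (a 3 4 4) - 1 * (p0) * (p2) * (p4) * (g 2 4 4) - 1 * (p0) * (p2) * (p4) * (a 2 4 4) * (a 3 5 2) - 1 * (p0) * (p2) * (p4) * (a 2 4 2) * (a 3 5 4) + 1 * (p0) * (p2) * (p4) * (a 2 3 4) * (a 4 5 2) + 1 * (p0) * (p2) * (p4) * (a 2 3 2) * (a 4 5 4) + 1 * (p0) * (p2) * (p4) * (a 0 5 4) * (a 3 4 0) + 1 * (p0) * (p2) * (p4) * (a 0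 5 0) * (a 3 4 4) - 1 * (p0) * (p2) * (p4) * (a 0 4 4) * (a 3 5 0) - 1 * (p0) * (p2) * (p4) * (a 0 4 4) * (a 1 2 0) - 1 * (p0) * (p2) * (p4) * (a 0 4 0) * (a 3 5 4) - 1 * (p0) * (p2) * (p4) * (a 0 4 0) * (a 1 2 4) + 1 * (p0) * (p2) * (p4) * (a 0 3 4) * (a 4 5 0) + 1 * (p0) * (p2) * (p4) * (a 0 3 0) * (a 4 5 4) + 1 * (p0) * (p2) * (p4) * (a 0 2 4) * (a 1 4 0) + 1 * (p0) * (p2) * (p4) * (a 0 2 0) * (a 1 4 4) - 1 * (p0) * (p2) * (p4) * (a 0 1 4) * (a 2 4 0) - 1 * (p0) * (p2) * (p4) * (a 0 1 0) * (a 2 4 4) + 1 * (p0) * (p2) * (p3) * (a 2 5 3) * (a 3 4 2) + 1 * (p0) * (p2) * (p3) * (a 2 5 2) * (a 3 4 3) - 1 * (p0) * (p2) * (p3) * (g 2 4 3) - 1 * (p0) * (p2) * (p3) * (a 2 4 3) * (a 3 5 2) - 1 * (p0) * (p2) * (p3) * (a 2 4 2) * (a 3 5 3) + 1 * (p0) *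 (p2) * (p3) * (a 2 3 3) * (a 4 5 2) + 1 * (p0) * (p2) * (p3) * (g 2 3 2) + 1 * (p0) * (p2) * (p3) * (a 2 3 2) * (a 4 5 3) + 1 * (p0) * (p2) * (p3) * (a 0 5 3) * (a 3 4 0) + 1 * (p0) * (p2) * (p3) * (a 0 5 0) * (a 3 4 3) - 1 * (p0) * (p2) * (p3) * (a 0 4 3) * (a 3 5 0) - 1 * (p0) * (p2) * (p3) * (a 0 4 3) * (a 1 2 0) - 1 * (p0) * (p2) * (p3) * (a 0 4 0) * (a 3 5 3) - 1 * (p0) * (p2) * (p3) * (a 0 4 0) * (a 1 2 3) + 1 * (p0) * (p2) * (p3) * (a 0 3 3) * (a 4 5 0) + 1 * (p0) * (p2) * (p3) * (a 0 3 2) * (a 1 2 0) + 1 * (p0) * (p2) * (p3) * (g 0 3 0) + 1 * (p0) * (p2) * (p3) * (a 0 3 0) * (a 4 5 3) + 1 * (p0) * (p2) * (p3) * (a 0 3 0) * (a 1 2 2) + 1 * (p0) * (p2) * (p3) * (a 0 2 3) * (a 1 4 0) - 1 * (p0) * (p2) * (p3) * (a 0 2 2) * (a 1 3 0) + 1 *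 (p0) * (p2) * (p3) * (a 0 2 0) * (a 1 4 3) - 1 * (p0) * (p2) * (p3) * (a 0 2 0) * (a 1 3 2) - 1 * (p0) * (p2) * (p3) * (a 0 1 3) * (a 2 4 0) + 1 * (p0) * (p2) * (p3) * (a 0 1 2) * (a 2 3 0) - 1 * (p0) * (p2) * (p3) * (a 0 1 0) * (a 2 4 3) + 1 * (p0) * (p2) * (p3) * (a 0 1 0) * (a 2 3 2) + 1 * (p0) * (p2) * (p2) * (a 2 5 2) * (a 3 4 2) - 1 * (p0) * (p2) * (p2) * (g 2 4 2) - 1 * (p0) * (p2) * (p2) * (a 2 4 2) * (a 3 5 2) + 1 * (p0) * (p2) * (p2) * (a 2 3 2) * (a 4 5 2) + 1 * (p0) * (p2) * (p2) * (a 0 5 2) * (a 3 4 0) + 1 * (p0) * (p2) * (p2) * (a 0 5 0) * (a 3 4 2) - 1 * (p0) * (p2) * (p2) * (a 0 4 2) * (a 3 5 0) - 1 * (p0) * (p2) * (p2) * (a 0 4 2) * (a 1 2 0) - 1 * (p0) * (p2) * (p2) * (g 0 4 0) - 1 * (p0) * (p2) * (p2) * (a 0 4 0) * (a 3 5 2)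 - 1 * (p0) * (p2) * (p2) * (a 0 4 0) * (a 1 2 2) + 1 * (p0) * (p2) * (p2) * (a 0 3 2) * (a 4 5 0) + 1 * (p0) * (p2) * (p2) * (a 0 3 0) * (a 4 5 2) + 1 * (p0) * (p2) * (p2) * (a 0 2 2) * (a 1 4 0) + 1 * (p0) * (p2) * (p2) * (a 0 2 0) * (a 1 4 2) - 1 * (p0) * (p2) * (p2) * (a 0 1 2) * (a 2 4 0) - 1 * (p0) * (p2) * (p2) * (a 0 1 0) * (a 2 4 2) + 1 * (p0) * (p1) * (p4) * (g 2 5 4) + 1 * (p0) * (p1) * (p4) * (a 2 5 4) * (a 3 4 1) + 1 * (p0) * (p1) * (p4) * (a 2 5 1) * (a 3 4 4) - 1 * (p0) * (p1) * (p4) * (a 2 4 4) * (a 3 5 1) - 1 * (p0) * (p1) * (p4) * (a 2 4 1) * (a 3 5 4) + 1 * (p0) * (p1) * (p4) * (a 2 3 4) * (a 4 5 1) + 1 * (p0) * (p1) * (p4) * (a 2 3 1) * (a 4 5 4) - 1 * (p0) * (p1) * (p4) * (a 1 5 4) * (a 3 4 0) - 1 * (p0) * (p1) * (p4) * (a 1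 5 0) * (a 3 4 4) + 1 * (p0) * (p1) * (p4) * (a 1 4 4) * (a 3 5 0) + 1 * (p0) * (p1) * (p4) * (a 1 4 0) * (a 3 5 4) - 1 * (p0) * (p1) * (p4) * (a 1 3 4) * (a 4 5 0) - 1 * (p0) * (p1) * (p4) * (a 1 3 0) * (a 4 5 4) + 1 * (p0) * (p1) * (p4) * (a 0 5 4) * (a 1 2 0) + 1 * (p0) * (p1) * (p4) * (a 0 5 0) * (a 1 2 4) - 1 * (p0) * (p1) * (p4) * (a 0 2 4) * (a 1 5 0) - 1 * (p0) * (p1) * (p4) * (a 0 2 0) * (a 1 5 4) + 1 * (p0) * (p1) * (p4) * (a 0 1 4) * (a 2 5 0) + 1 * (p0) * (p1) * (p4) * (a 0 1 0) * (a 2 5 4) + 1 * (p0) * (p1) * (p3) * (g 2 5 3) + 1 * (p0) * (p1) * (p3) * (a 2 5 3) * (a 3 4 1) + 1 * (p0) * (p1) * (p3) * (a 2 5 1) * (a 3 4 3) - 1 * (p0) * (p1) * (p3) * (a 2 4 3) * (a 3 5 1) - 1 * (p0) * (p1) * (p3) * (a 2 4 1) * (a 3 5 3) + 1 * (p0) *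 (p1) * (p3) * (a 2 3 3) * (a 4 5 1) + 1 * (p0) * (p1) * (p3) * (g 2 3 1) + 1 * (p0) * (p1) * (p3) * (a 2 3 1) * (a 4 5 3) - 1 * (p0) * (p1) * (p3) * (a 1 5 3) * (a 3 4 0) - 1 * (p0) * (p1) * (p3) * (a 1 5 0) * (a 3 4 3) + 1 * (p0) * (p1) * (p3) * (a 1 4 3) * (a 3 5 0) + 1 * (p0) * (p1) * (p3) * (a 1 4 0) * (a 3 5 3) - 1 * (p0) * (p1) * (p3) * (a 1 3 3) * (a 4 5 0) - 1 * (p0) * (p1) * (p3) * (g 1 3 0) - 1 * (p0) * (p1) * (p3) * (a 1 3 0) * (a 4 5 3) + 1 * (p0) * (p1) * (p3) * (a 0 5 3) * (a 1 2 0) + 1 * (p0) * (p1) * (p3) * (a 0 5 0) * (a 1 2 3) + 1 * (p0) * (p1) * (p3) * (a 0 3 1) * (a 1 2 0) + 1 * (p0) * (p1) * (p3) * (a 0 3 0) * (a 1 2 1) - 1 * (p0) * (p1) * (p3) * (a 0 2 3) * (a 1 5 0) - 1 * (p0) * (p1) * (p3) * (a 0 2 1) * (a 1 3 0) - 1 *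 (p0) * (p1) * (p3) * (a 0 2 0) * (a 1 5 3) - 1 * (p0) * (p1) * (p3) * (a 0 2 0) * (a 1 3 1) + 1 * (p0) * (p1) * (p3) * (a 0 1 3) * (a 2 5 0) + 1 * (p0) * (p1) * (p3) * (a 0 1 1) * (a 2 3 0) + 1 * (p0) * (p1) * (p3) * (a 0 1 0) * (a 2 5 3) + 1 * (p0) * (p1) * (p3) * (a 0 1 0) * (a 2 3 1) + 1 * (p0) * (p1) * (p2) * (g 2 5 2) + 1 * (p0) * (p1) * (p2) * (a 2 5 2) * (a 3 4 1) + 1 * (p0) * (p1) * (p2) * (a 2 5 1) * (a 3 4 2) - 1 * (p0) * (p1) * (p2) * (a 2 4 2) * (a 3 5 1) - 1 * (p0) * (p1) * (p2) * (g 2 4 1) - 1 * (p0) * (p1) * (p2) * (a 2 4 1) * (a 3 5 2) + 1 * (p0) * (p1) * (p2) * (a 2 3 2) * (a 4 5 1) + 1 * (p0) * (p1) * (p2) * (a 2 3 1) * (a 4 5 2) - 1 * (p0) * (p1) * (p2) * (a 1 5 2) * (a 3 4 0) - 1 * (p0) * (p1) * (p2) * (a 1 5 0) * (a 3 4 2)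 + 1 * (p0) * (p1) * (p2) * (a 1 4 2) * (a 3 5 0) + 1 * (p0) * (p1) * (p2) * (g 1 4 0) + 1 * (p0) * (p1) * (p2) * (a 1 4 0) * (a 3 5 2) - 1 * (p0) * (p1) * (p2) * (a 1 3 2) * (a 4 5 0) - 1 * (p0) * (p1) * (p2) * (a 1 3 0) * (a 4 5 2) + 1 * (p0) * (p1) * (p2) * (a 0 5 2) * (a 1 2 0) + 1 * (p0) * (p1) * (p2) * (a 0 5 1) * (a 3 4 0) + 1 * (p0) * (p1) * (p2) * (g 0 5 0) + 1 * (p0) * (p1) * (p2) * (a 0 5 0) * (a 3 4 1) + 1 * (p0) * (p1) * (p2) * (a 0 5 0) * (a 1 2 2) - 1 * (p0) * (p1) * (p2) * (a 0 4 1) * (a 3 5 0) - 1 * (p0) * (p1) * (p2) * (a 0 4 1) * (a 1 2 0) - 1 * (p0) * (p1) * (p2) * (a 0 4 0) * (a 3 5 1) - 1 * (p0) * (p1) * (p2) * (a 0 4 0) * (a 1 2 1) + 1 * (p0) * (p1) * (p2) * (a 0 3 1) * (a 4 5 0) + 1 * (p0) * (p1) * (p2) * (a 0 3 0) * (a 4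 5 1) - 1 * (p0) * (p1) * (p2) * (a 0 2 2) * (a 1 5 0) + 1 * (p0) * (p1) * (p2) * (a 0 2 1) * (a 1 4 0) - 1 * (p0) * (p1) * (p2) * (a 0 2 0) * (a 1 5 2) + 1 * (p0) * (p1) * (p2) * (a 0 2 0) * (a 1 4 1) + 1 * (p0) * (p1) * (p2) * (a 0 1 2) * (a 2 5 0) - 1 * (p0) * (p1) * (p2) * (a 0 1 1) * (a 2 4 0) + 1 * (p0) * (p1) * (p2) * (a 0 1 0) * (a 2 5 2) - 1 * (p0) * (p1) * (p2) * (a 0 1 0) * (a 2 4 1) + 1 * (p0) * (p1) * (p1) * (g 2 5 1) + 1 * (p0) * (p1) * (p1) * (a 2 5 1) * (a 3 4 1) - 1 * (p0) * (p1) * (p1) * (a 2 4 1) * (a 3 5 1) + 1 * (p0) * (p1) * (p1) * (a 2 3 1) * (a 4 5 1) - 1 * (p0) * (p1) * (p1) * (a 1 5 1) * (a 3 4 0) - 1 * (p0) * (p1) * (p1) * (g 1 5 0) - 1 * (p0) * (p1) * (p1) * (a 1 5 0) * (a 3 4 1) + 1 * (p0) * (p1) * (p1) * (a 1 4 1) *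 (a 3 5 0) + 1 * (p0) * (p1) * (p1) * (a 1 4 0) * (a 3 5 1) - 1 * (p0) * (p1) * (p1) * (a 1 3 1) * (a 4 5 0) - 1 * (p0) * (p1) * (p1) * (a 1 3 0) * (a 4 5 1) + 1 * (p0) * (p1) * (p1) * (a 0 5 1) * (a 1 2 0) + 1 * (p0) * (p1) * (p1) * (a 0 5 0) * (a 1 2 1) - 1 * (p0) * (p1) * (p1) * (a 0 2 1) * (a 1 5 0) - 1 * (p0) * (p1) * (p1) * (a 0 2 0) * (a 1 5 1) + 1 * (p0) * (p1) * (p1) * (a 0 1 1) * (a 2 5 0) + 1 * (p0) * (p1) * (p1) * (a 0 1 0) * (a 2 5 1) + 1 * (p0) * (p0) * (p4) * (a 2 5 4) * (a 3 4 0) + 1 * (p0) * (p0) * (p4) * (a 2 5 0) * (a 3 4 4) - 1 * (p0) * (p0) * (p4) * (a 2 4 4) * (a 3 5 0) - 1 * (p0) * (p0) * (p4) * (a 2 4 0) * (a 3 5 4) + 1 * (p0) * (p0) * (p4) * (a 2 3 4) * (a 4 5 0) + 1 * (p0) * (p0) * (p4) * (a 2 3 0) * (a 4 5 4) + 1 *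 (p0) * (p0) * (p3) * (a 2 5 3) * (a 3 4 0) + 1 * (p0) * (p0) * (p3) * (a 2 5 0) * (a 3 4 3) - 1 * (p0) * (p0) * (p3) * (a 2 4 3) * (a 3 5 0) - 1 * (p0) * (p0) * (p3) * (a 2 4 0) * (a 3 5 3) + 1 * (p0) * (p0) * (p3) * (a 2 3 3) * (a 4 5 0) + 1 * (p0) * (p0) * (p3) * (g 2 3 0) + 1 * (p0) * (p0) * (p3) * (a 2 3 0) * (a 4 5 3) + 1 * (p0) * (p0) * (p3) * (a 0 3 0) * (a 1 2 0) - 1 * (p0) * (p0) * (p3) * (a 0 2 0) * (a 1 3 0) + 1 * (p0) * (p0) * (p3) * (a 0 1 0) * (a 2 3 0) + 1 * (p0) * (p0) * (p2) * (a 2 5 2) * (a 3 4 0) + 1 * (p0) * (p0) * (p2) * (a 2 5 0) * (a 3 4 2) - 1 * (p0) * (p0) * (p2) * (a 2 4 2) * (a 3 5 0) - 1 * (p0) * (p0) * (p2) * (g 2 4 0) - 1 * (p0) * (p0) * (p2) * (a 2 4 0) * (a 3 5 2) + 1 * (p0) * (p0) * (p2) * (a 2 3 2) * (a 4 5 0)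 + 1 * (p0) * (p0) * (p2) * (a 2 3 0) * (a 4 5 2) + 1 * (p0) * (p0) * (p2) * (a 0 5 0) * (a 3 4 0) - 1 * (p0) * (p0) * (p2) * (a 0 4 0) * (a 3 5 0) - 1 * (p0) * (p0) * (p2) * (a 0 4 0) * (a 1 2 0) + 1 * (p0) * (p0) * (p2) * (a 0 3 0) * (a 4 5 0) + 1 * (p0) * (p0) * (p2) * (a 0 2 0) * (a 1 4 0) - 1 * (p0) * (p0) * (p2) * (a 0 1 0) * (a 2 4 0) + 1 * (p0) * (p0) * (p1) * (a 2 5 1) * (a 3 4 0) + 1 * (p0) * (p0) * (p1) * (g 2 5 0) + 1 * (p0) * (p0) * (p1) * (a 2 5 0) * (a 3 4 1) - 1 * (p0) * (p0) * (p1) * (a 2 4 1) * (a 3 5 0) - 1 * (p0) * (p0) * (p1) * (a 2 4 0) * (a 3 5 1) + 1 * (p0) * (p0) * (p1) * (a 2 3 1) * (a 4 5 0) + 1 * (p0) * (p0) * (p1) * (a 2 3 0) * (a 4 5 1) - 1 * (p0) * (p0) * (p1) * (a 1 5 0) * (a 3 4 0) + 1 * (p0) * (p0) * (p1) * (a 1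 4 0) * (a 3 5 0) - 1 * (p0) * (p0) * (p1) * (a 1 3 0) * (a 4 5 0) + 1 * (p0) * (p0) * (p1) * (a 0 5 0) * (a 1 2 0) - 1 * (p0) * (p0) * (p1) * (a 0 2 0) * (a 1 5 0) + 1 * (p0) * (p0) * (p1) * (a 0 1 0) * (a 2 5 0) + 1 * (p0) * (p0) * (p0) * (a 2 5 0) * (a 3 4 0) - 1 * (p0) * (p0) * (p0) * (a 2 4 0) * (a 3 5 0) + 1 * (p0) * (p0) * (p0) * (a 2 3 0) * (a 4 5 0)) = 0 := by
    intro p0 p1 p2 p3 p4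
    have hb : ∀ i j, i < j → eval ![p0,p1,p2,p3,p4] (M' i j)
        = a i j 0 * p0 + a i j 1 * p1 + a i j 2 * p2 + a i j 3 * p3 + a i j 4 * p4 := by
      intro i j h
      rw [ha i j h]
      simp [Fin.sum_univ_five, Matrix.cons_val_zero, Matrix.cons_val_one, Matrix.head_cons,
        Matrix.cons_val_two, Matrix.cons_val_three, Matrix.cons_val_four, Matrix.tail_cons]
    have hgv : ∀ i j, eval ![p0,p1,p2,p3,p4] (M'' i j)
        = g i j 0 * p0 + g i j 1 * p1 + g i j 2 * p2 + g i j 3 * p3 + g i j 4 * p4 := by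
      intro i j
      rw [hMpp i j]
      simp [Fin.sum_univ_five, Matrix.cons_val_zero, Matrix.cons_val_one, Matrix.head_cons,
        Matrix.cons_val_two, Matrix.cons_val_three, Matrix.cons_val_four, Matrix.tail_cons]
    have hNBmap : (Matrix.of fun i j =>
        Polynomial.map (MvPolynomial.eval ![p0,p1,p2,p3,p4]) (NB i j))
        = Matrix.of fun i j =>
          Polynomial.C (MvPolynomial.eval ![p0,p1,p2,p3,p4] (MM i j))
          + Polynomial.C (MvPolynomial.eval ![p0,p1,p2,p3,p4] (M' i j)) * Polynomial.X
          + Polynomial.C (MvPolynomial.eval ![p0,p1,p2,p3,p4] (M'' i j)) * Polynomial.X ^ 2 := by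
      apply congrArg Matrix.of
      funext i j
      rw [hNB]
      exact entry_map (MvPolynomial.eval ![p0,p1,p2,p3,p4]) (MM i j) (M' i j) (M'' i j)
    have h1 : (Polynomial.map (MvPolynomial.eval ![p0,p1,p2,p3,p4]) (pf NB)).coeff 1 = 0 := by
      rw [hq, Polynomial.map_mul, Polynomial.map_pow, Polynomial.map_X, mul_comm,
        Polynomial.coeff_mul_X_pow']
      norm_num
    have h2 : (Polynomial.map (MvPolynomial.eval ![p0,p1,p2,p3,p4]) (pf NB)).coeff 2 = 0 := by
      rw [hq, Polynomial.map_mul, Polynomial.map_pow, Polynomial.map_X, mul_comm,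
        Polynomial.coeff_mul_X_pow']
      norm_num
    have hcomm : Polynomial.map (MvPolynomial.eval ![p0,p1,p2,p3,p4]) (pf NB)
        = pf (Matrix.of fun i j =>
          Polynomial.C (MvPolynomial.eval ![p0,p1,p2,p3,p4] (MM i j))
          + Polynomial.C (MvPolynomial.eval ![p0,p1,p2,p3,p4] (M' i j)) * Polynomial.X
          + Polynomial.C (MvPolynomial.eval ![p0,p1,p2,p3,p4] (M'' i j)) * Polynomial.X ^ 2) := by
      rw [← hNBmap]
      exact (pf_ringHom_comm (Polynomial.mapRingHom (MvPolynomial.eval ![p0,p1,p2,p3,p4])) NB).symm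
    rw [hcomm] at h1 h2
    obtain ⟨hm1, hm2⟩ := master_coeffs
      (fun i j => MvPolynomial.eval ![p0,p1,p2,p3,p4] (MM i j))
      (fun i j => MvPolynomial.eval ![p0,p1,p2,p3,p4] (M' i j))
      (fun i j => MvPolynomial.eval ![p0,p1,p2,p3,p4] (M'' i j))
    rw [hm1] at h1
    rw [hm2] at h2
    simp only [hm01, hm02, hm03, hm04, hm05, hm12, hm13, hm14, hm15, hm23, hm24, hm25, hm34, hm35, hm45, hb 0 1 (by decide), hb 0 2 (by decide), hb 0 3 (by decide), hb 0 4 (by decide), hb 0 5 (by decide), hb 1 2 (by decide), hb 1 3 (by decide), hb 1 4 (by decide), hb 1 5 (by decide), hb 2 3 (by decide), hb 2 4 (by decide), hb 2 5 (by decide), hb 3 4 (by decide), hb 3 5 (by decide), hb 4 5 (by decide), hgv, eval_X, _root_.map_zero,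
      Matrix.cons_val_zero, Matrix.cons_val_one, Matrix.head_cons,
      Matrix.cons_val_two, Matrix.cons_val_three, Matrix.cons_val_four, Matrix.tail_cons] at h1 h2
    exact ⟨by linear_combination h1, by linear_combination h2⟩
  have e154 : a 1 5 4 = 0 := by
    linear_combination (hS 0 1 0 0 0).1 - (hS 0 1 0 0 1).1
  have e044 : a 0 4 4 = 0 := by
    linear_combination (hS 0 0 1 0 0).1 - (hS 0 0 1 0 1).1
  have e134 : a 1 3 4 = 0 := by
    linear_combination (hS 0 1 0 1 0).1 - (hS 0 1 0 1 1).1 - e154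
  have eS : a 1 4 4 + a 0 5 4 = 0 := by
    linear_combination (hS 0 1 1 0 1).1 - (hS 0 1 1 0 0).1 - (hS 0 1 0 0 1).1 + (hS 0 1 0 0 0).1
      - (hS 0 0 1 0 1).1 + (hS 0 0 1 0 0).1
  have e254 : a 2 5 4 = 0 := by
    linear_combination (hS 1 1 0 0 1).1 - (hS 1 1 0 0 0).1 + e154
  have e244 : a 2 4 4 = 0 := by
    linear_combination (hS 1 0 1 0 0).1 - (hS 1 0 1 0 1).1 - e044
  have e034 : a 0 3 4 = 0 := by
    linear_combination (hS 0 0 1 1 1).1 - (hS 0 0 1 1 0).1 + e044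
  constructor
  · linear_combination ((1:ℂ)/2) * ((hS 0 1 0 0 1).2 + (hS 0 1 0 0 (-1)).2 - 2 * (hS 0 1 0 0 0).2)
      - a 3 5 4 * eS + a 3 4 4 * e154 + a 4 5 4 * e134 + a 0 2 4 * e154 - a 0 1 4 * e254
  · linear_combination (-(1:ℂ)/2) * ((hS 0 0 1 0 1).2 + (hS 0 0 1 0 (-1)).2 - 2 * (hS 0 0 1 0 0).2)
      + a 0 2 4 * eS - (a 3 5 4 + a 1 2 4) * e044 + a 4 5 4 * e034 - a 0 1 4 * e244
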